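/- arXiv:2205.13258 — 2 statements merged into one kernel-verified Lean document; each statement's English description precedes it below -/
import Mathlib

section
/- Let λ ∈ ℂ with |λ| > 1, let ψ : ℂ → ℂ be entire (nonconstant), and suppose there is an affine automorphism h(z) = az + b of ℂ with a ≠ 0, b ≠ 0 such that ψ ∘ h = ψ. Define g(z) = az + λb. Then ψ ∘ g = ψ, provided ψ satisfies the functional equation ψ(λz) = F(ψ(z)) for some function F : ℂ → ℂ. -/
/-! Since `g = m ∘ h ∘ m⁻¹` with `m z = λ z`, the functional equation `ψ ∘ m = F ∘ ψ` gives
`ψ ∘ g = F ∘ ψ ∘ h ∘ m⁻¹ = F ∘ ψ ∘ m⁻¹ = ψ`. -/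

theorem apply_conj_eq_of_invariant {α β : Type*} {ψ : α → β} {F : β → β} {m m' h : α → α}
    (hfun : ∀ x, ψ (m x) = F (ψ x)) (hinv : ∀ x, ψ (h x) = ψ x)
    (hm : Function.RightInverse m' m) (x : α) :
    ψ (m (h (m' x))) = ψ x := by
  rw [hfun, hinv, ← hfun, hm x]

theorem stmt_0_general (lam a b : ℂ) (hlam : 1 < ‖lam‖)
    (ψ F : ℂ → ℂ)
    (hinv : ∀ z : ℂ, ψ (a * z + b) = ψ z)
    (hfun : ∀ z : ℂ, ψ (lam * z) = F (ψ z)) :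
    ∀ z : ℂ, ψ (a * z + lam * b) = ψ z := by
  intro z
  have hlam₀ : lam ≠ 0 := norm_pos_iff.mp (one_pos.trans hlam)
  have hconj : a * z + lam * b = lam * (a * (lam⁻¹ * z) + b) := by field_simp
  rw [hconj]
  exact apply_conj_eq_of_invariant (m := (lam * ·)) (h := (a * · + b)) hfun hinv
    (mul_inv_cancel_left₀ hlam₀) z

/-- If an entire nonconstant `ψ` satisfies the Poincaré functional equation
`ψ(λz) = F(ψ(z))` with `|λ| > 1` and is invariant under the affine map
`h(z) = az + b` (with `a ≠ 0`, `b ≠ 0`), then it is also invariant under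
`g(z) = az + λb`. -/
theorem stmt_0 (lam a b : ℂ) (hlam : 1 < ‖lam‖)
    (ψ F : ℂ → ℂ) (hψ : Differentiable ℂ ψ) (hnc : ¬ ∃ c : ℂ, ψ = fun _ => c)
    (ha : a ≠ 0) (hb : b ≠ 0)
    (hinv : ∀ z : ℂ, ψ (a * z + b) = ψ z)
    (hfun : ∀ z : ℂ, ψ (lam * z) = F (ψ z)) :
    ∀ z : ℂ, ψ (a * z + lam * b) = ψ z :=
  stmt_0_general lam a b hlam ψ F hinv hfun
end

section
/- Let K be a number field, O_K its ring of integers viewed as a discrete subgroup of ℂ (for K imaginary quadratic), λ ∈ O_K with |λ| > 1, and a ∈ ℂ*, b ∈ ℂ. Suppose (μ_i) is a sequence in O_K with μ_i − aλ^i → b as i → ∞. Then there exists m such that μ_i = aλ^i + b for all i ≥ m, and moreover a, b ∈ K. -/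
open Filter NumberField

/-!
Multiplying by `λ` and shifting the index, `μ (i + 1) - λ μ i ∈ O_K` converges to `b - λ b`.
Since `O_K` is a lattice in `ℂ`, this sequence is eventually constant, so the error
`e i = μ i - a λ ^ i - b` eventually satisfies `e (i + 1) = λ e i`. As `|λ| > 1`, `|e i|` is then
nondecreasing while tending to `0`, hence `e` eventually vanishes. Two consecutive exact equalities
`μ i = a λ ^ i + b` can be solved for `a` and `b` inside `K`.
-/

theorem Filter.Tendsto.eventually_eq_of_eventually_mem_finite {ι X : Type*} [TopologicalSpace X]
    [T1Space X] {l : Filter ι} {f : ι → X} {s : Set X} {c : X} (h : Tendsto f l (nhds c))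
    (hs : s.Finite) (hf : ∀ᶠ i in l, f i ∈ s) : ∀ᶠ i in l, f i = c := by
  have hnhds : (s \ {c})ᶜ ∈ nhds c := (hs.sdiff.isClosed).compl_mem_nhds fun hc => hc.2 rfl
  filter_upwards [hf, h hnhds] with i hi hic
  by_contra hne
  exact hic ⟨hi, hne⟩

theorem eventually_eq_zero_of_tendsto_zero_of_norm_le_succ {E : Type*} [NormedAddCommGroup E]
    {e : ℕ → E} (he : Tendsto e atTop (nhds 0)) (hgrow : ∀ᶠ i in atTop, ‖e i‖ ≤ ‖e (i + 1)‖) :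
    ∀ᶠ i in atTop, e i = 0 := by
  obtain ⟨m, hm⟩ := eventually_atTop.1 hgrow
  filter_upwards [eventually_ge_atTop m] with i hi
  have hmono : Monotone fun n => ‖e (n + i)‖ :=
    monotone_nat_of_le_succ fun n => by simpa [add_right_comm] using hm (n + i) (by omega)
  have hlim : Tendsto (fun n => ‖e (n + i)‖) atTop (nhds 0) := by
    have := he.norm.comp (tendsto_add_atTop_nat i)
    rwa [norm_zero] at this
  simpa using hmono.ge_of_tendsto hlim 0

theorem mem_subfield_of_mul_pow_add_mem {E : Type*} [Field E] (F : Subfield E) {L a b : E}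
    {m : ℕ} (hL0 : L ≠ 0) (hL1 : L ≠ 1) (hL : L ∈ F) (h₀ : a * L ^ m + b ∈ F)
    (h₁ : a * L ^ (m + 1) + b ∈ F) : a ∈ F ∧ b ∈ F := by
  have ha : a = (a * L ^ (m + 1) + b - (a * L ^ m + b)) / (L ^ m * (L - 1)) := by
    have : L - 1 ≠ 0 := sub_ne_zero.mpr hL1
    field_simp
    ring
  have haF : a ∈ F :=
    ha ▸ F.div_mem (F.sub_mem h₁ h₀) (F.mul_mem (F.pow_mem hL m) (F.sub_mem hL F.one_mem))
  refine ⟨haF, ?_⟩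
  simpa using F.sub_mem h₀ (F.mul_mem haF (F.pow_mem hL m))

namespace NumberField

variable {K : Type*} [Field K]

theorem subsingleton_infinitePlace_of_finrank_eq_two [NumberField K]
    (hdeg : Module.finrank ℚ K = 2) (himag : IsEmpty (K →+* ℝ)) :
    Subsingleton (InfinitePlace K) := by
  classical
  have hreal : InfinitePlace.nrRealPlaces K = 0 := by
    rw [← InfinitePlace.card_real_embeddings, Fintype.card_eq_zero_iff]
    exact ⟨fun φ => himag.false φ.2.embedding⟩
  have hrank := InfinitePlace.card_add_two_mul_card_eq_rank K
  rw [← Fintype.card_le_one_iff_subsingleton,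
    InfinitePlace.card_eq_nrRealPlaces_add_nrComplexPlaces]
  omega

theorem norm_embedding_eq_of_subsingleton_infinitePlace [Subsingleton (InfinitePlace K)]
    (φ σ : K →+* ℂ) (x : K) : ‖φ x‖ = ‖σ x‖ := by
  rw [← InfinitePlace.apply, ← InfinitePlace.apply, Subsingleton.elim (InfinitePlace.mk φ)]

theorem eventually_eq_of_tendsto_embedding_integers [NumberField K]
    [Subsingleton (InfinitePlace K)] (σ : K →+* ℂ) {ι : Type*} {l : Filter ι} {ν : ι → 𝓞 K} {c : ℂ}
    (h : Tendsto (fun i => σ (algebraMap (𝓞 K) K (ν i))) l (nhds c)) :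
    ∀ᶠ i in l, σ (algebraMap (𝓞 K) K (ν i)) = c := by
  refine h.eventually_eq_of_eventually_mem_finite
    ((Embeddings.finite_of_norm_le K ℂ (‖c‖ + 1)).image σ) ?_
  filter_upwards [h.norm.eventually_lt_const (lt_add_one ‖c‖)] with i hi
  refine ⟨_, ⟨RingOfIntegers.isIntegral_coe (ν i), fun φ => ?_⟩, rfl⟩
  rw [norm_embedding_eq_of_subsingleton_infinitePlace φ σ]
  exact hi.le

end NumberField

theorem stmt_4_general (K : Type*) [Field K] [NumberField K]
    (hdeg : Module.finrank ℚ K = 2) (himag : IsEmpty (K →+* ℝ))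
    (σ : K →+* ℂ)
    (lam : 𝓞 K) (hlam : 1 < ‖σ (algebraMap (𝓞 K) K lam)‖)
    (a b : ℂ)
    (μ : ℕ → 𝓞 K)
    (hconv : Tendsto
      (fun i => σ (algebraMap (𝓞 K) K (μ i)) - a * (σ (algebraMap (𝓞 K) K lam)) ^ i)
      atTop (nhds b)) :
    (∃ m : ℕ, ∀ i ≥ m,
      σ (algebraMap (𝓞 K) K (μ i)) = a * (σ (algebraMap (𝓞 K) K lam)) ^ i + b) ∧
    (∃ a' : K, σ a' = a) ∧ (∃ b' : K, σ b' = b) := by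
  have := NumberField.subsingleton_infinitePlace_of_finrank_eq_two hdeg himag
  set L := σ (algebraMap (𝓞 K) K lam)
  set f : ℕ → ℂ := fun i => σ (algebraMap (𝓞 K) K (μ i))
  set e : ℕ → ℂ := fun i => f i - a * L ^ i - b
  have he : Tendsto e atTop (nhds 0) := by simpa using hconv.sub_const b
  have hdiff :
      ∀ᶠ i in atTop, σ (algebraMap (𝓞 K) K (μ (i + 1) - lam * μ i)) = b - L * b := by
    refine NumberField.eventually_eq_of_tendsto_embedding_integers σ ?_
    convert (hconv.comp (tendsto_add_atTop_nat 1)).sub (hconv.const_mul L) using 2 with i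
    simp only [map_sub, map_mul, Function.comp_apply, pow_succ]
    ring
  have hgrow : ∀ᶠ i in atTop, ‖e i‖ ≤ ‖e (i + 1)‖ := by
    filter_upwards [hdiff] with i hi
    have hrec : e (i + 1) = L * e i := by
      simp only [map_sub, map_mul] at hi
      simp only [e, f, pow_succ]
      linear_combination hi
    rw [hrec, norm_mul]
    exact le_mul_of_one_le_left (norm_nonneg _) hlam.le
  obtain ⟨m, hm⟩ :=
    eventually_atTop.1 (eventually_eq_zero_of_tendsto_zero_of_norm_le_succ he hgrow)
  have hexact : ∀ i ≥ m, f i = a * L ^ i + b := fun i hi => by linear_combination hm i hi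
  have hL0 : L ≠ 0 := norm_pos_iff.mp (one_pos.trans hlam)
  have hL1 : L ≠ 1 := fun h => by simp [h] at hlam
  have hmem : ∀ i ≥ m, a * L ^ i + b ∈ σ.fieldRange := fun i hi =>
    hexact i hi ▸ σ.mem_fieldRange_self _
  obtain ⟨haK, hbK⟩ := mem_subfield_of_mul_pow_add_mem σ.fieldRange hL0 hL1
    (σ.mem_fieldRange_self _) (hmem m le_rfl) (hmem (m + 1) (by omega))
  exact ⟨⟨m, hexact⟩, haK, hbK⟩

/-- Let `K` be an imaginary quadratic field (degree 2 over `ℚ`, no real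
embedding), embedded in `ℂ` via `σ`, so that `σ(O_K)` is a discrete subgroup of
`ℂ`. Let `λ ∈ O_K` with `|σ(λ)| > 1`, `a ∈ ℂ*`, `b ∈ ℂ`, and let `μ i ∈ O_K` be
a sequence with `σ(μ i) - a σ(λ)^i → b`. Then `σ(μ i) = a σ(λ)^i + b` for all
large `i`, and moreover `a` and `b` lie in `σ(K)`. -/
theorem stmt_4 (K : Type*) [Field K] [NumberField K]
    (hdeg : Module.finrank ℚ K = 2) (himag : IsEmpty (K →+* ℝ))
    (σ : K →+* ℂ)
    (lam : 𝓞 K) (hlam : 1 < ‖σ (algebraMap (𝓞 K) K lam)‖)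
    (a b : ℂ) (ha : a ≠ 0)
    (μ : ℕ → 𝓞 K)
    (hconv : Tendsto
      (fun i => σ (algebraMap (𝓞 K) K (μ i)) - a * (σ (algebraMap (𝓞 K) K lam)) ^ i)
      atTop (nhds b)) :
    (∃ m : ℕ, ∀ i ≥ m,
      σ (algebraMap (𝓞 K) K (μ i)) = a * (σ (algebraMap (𝓞 K) K lam)) ^ i + b) ∧
    (∃ a' : K, σ a' = a) ∧ (∃ b' : K, σ b' = b) :=
  stmt_4_general K hdeg himag σ lam hlam a b μ hconv
end
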